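/- If (π, S, T, W) is a principle dilation system of a finite-dimensional linear system (φ, A, V) and (π₁, S₁, T₁, W₁) is a linearly minimal dilation system with dim W₁ ≤ dim W, then (π₁, S₁, T₁, W₁) is irreducible. -/
import Mathlib


open scoped TensorProduct

variable (k : Type*) [Field k] (A : Type*) [Ring A] [Algebra k A]
  (V : Type*) [AddCommGroup V] [Module k V]

/-- if `(π, S, T, W)` is a principle dilation system of a finite-dimensional
linear system and `(π₁, S₁, T₁, W₁)` is a linearly minimal dilation system with
`dim W₁ ≤ dim W`, then `(π₁, S₁, T₁, W₁)` is irreducible. -/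
theorem minimal_dilation_of_smaller_dimension_irreducible
    [FiniteDimensional k A] [FiniteDimensional k V]
    (φ : A →ₗ[k] Module.End k V) (hφ : φ 1 = 1)
    (W : Type*) [AddCommGroup W] [Module k W]
    (π : A →ₐ[k] Module.End k W) (T : V →ₗ[k] W) (S : W →ₗ[k] V)
    (hT : Function.Injective T) (hS : Function.Surjective S)
    (hdil : ∀ a : A, (φ a : V →ₗ[k] V) = S ∘ₗ (π a : W →ₗ[k] W) ∘ₗ T)
    (hmin : Submodule.span k {w : W | ∃ (a : A) (x : V), w = π a (T x)} = ⊤)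
    (hirr : ∀ K : Submodule k W, (∀ a : A, K.map (π a : W →ₗ[k] W) ≤ K) →
      K ≤ LinearMap.ker S → K = ⊥)
    (W₁ : Type*) [AddCommGroup W₁] [Module k W₁]
    (π₁ : A →ₐ[k] Module.End k W₁) (T₁ : V →ₗ[k] W₁) (S₁ : W₁ →ₗ[k] V)
    (hT₁ : Function.Injective T₁) (hS₁ : Function.Surjective S₁)
    (hdil₁ : ∀ a : A, (φ a : V →ₗ[k] V) = S₁ ∘ₗ (π₁ a : W₁ →ₗ[k] W₁) ∘ₗ T₁)
    (hmin₁ : Submodule.span k {w : W₁ | ∃ (a : A) (x : V), w = π₁ a (T₁ x)} = ⊤)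
    (hdim : Module.finrank k W₁ ≤ Module.finrank k W) :
    ∀ K : Submodule k W₁, (∀ a : A, K.map (π₁ a : W₁ →ₗ[k] W₁) ≤ K) →
      K ≤ LinearMap.ker S₁ → K = ⊥ := by
  classical
  set ρ : A ⊗[k] V →ₗ[k] W :=
    TensorProduct.lift (((LinearMap.llcomp k V W W).flip T) ∘ₗ π.toLinearMap) with hρdef
  set ρ₁ : A ⊗[k] V →ₗ[k] W₁ :=
    TensorProduct.lift (((LinearMap.llcomp k V W₁ W₁).flip T₁) ∘ₗ π₁.toLinearMap) with hρ₁def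
  have hρ_tmul : ∀ (a : A) (x : V), ρ (a ⊗ₜ[k] x) = π a (T x) := fun a x => rfl
  have hρ₁_tmul : ∀ (a : A) (x : V), ρ₁ (a ⊗ₜ[k] x) = π₁ a (T₁ x) := fun a x => rfl
  have hρsurj : Function.Surjective ρ := by
    rw [← LinearMap.range_eq_top, eq_top_iff, ← hmin, Submodule.span_le]
    rintro w ⟨a, x, rfl⟩; exact ⟨a ⊗ₜ x, rfl⟩
  have hρ₁surj : Function.Surjective ρ₁ := by
    rw [← LinearMap.range_eq_top, eq_top_iff, ← hmin₁, Submodule.span_le]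
    rintro w ⟨a, x, rfl⟩; exact ⟨a ⊗ₜ x, rfl⟩
  have hcomm : ∀ (a : A) (z : A ⊗[k] V),
      ρ (LinearMap.rTensor V (LinearMap.mulLeft k a) z) = π a (ρ z) := by
    intro a z
    induction z using TensorProduct.induction_on with
    | zero => simp
    | tmul b x =>
        rw [LinearMap.rTensor_tmul, hρ_tmul, hρ_tmul, LinearMap.mulLeft_apply, map_mul]
        rfl
    | add y z hy hz => simp [map_add, hy, hz]
  have hcomm₁ : ∀ (a : A) (z : A ⊗[k] V),
      ρ₁ (LinearMap.rTensor V (LinearMap.mulLeft k a) z) = π₁ a (ρ₁ z) := by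
    intro a z
    induction z using TensorProduct.induction_on with
    | zero => simp
    | tmul b x =>
        rw [LinearMap.rTensor_tmul, hρ₁_tmul, hρ₁_tmul, LinearMap.mulLeft_apply, map_mul]
        rfl
    | add y z hy hz => simp [map_add, hy, hz]
  have hSρ : ∀ z : A ⊗[k] V, S (ρ z) = S₁ (ρ₁ z) := by
    intro z
    induction z using TensorProduct.induction_on with
    | zero => simp
    | tmul a x =>
        rw [hρ_tmul, hρ₁_tmul]
        have h1 := congrArg (fun f : V →ₗ[k] V => f x) (hdil a)
        have h2 := congrArg (fun f : V →ₗ[k] V => f x) (hdil₁ a)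
        simp only [LinearMap.coe_comp, Function.comp_apply] at h1 h2
        rw [← h1, ← h2]
    | add y z hy hz => rw [map_add, map_add, map_add, map_add, hy, hz]
  -- ker ρ₁ ≤ ker ρ using irreducibility of W
  have hker : LinearMap.ker ρ₁ ≤ LinearMap.ker ρ := by
    have hN : (LinearMap.ker ρ₁).map ρ = ⊥ := by
      refine hirr _ ?_ ?_
      · intro a w hw
        obtain ⟨v, hv, rfl⟩ := hw
        obtain ⟨z, hz, rfl⟩ := hv
        refine ⟨LinearMap.rTensor V (LinearMap.mulLeft k a) z, ?_, hcomm a z⟩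
        show _ ∈ LinearMap.ker ρ₁
        rw [LinearMap.mem_ker, hcomm₁, LinearMap.mem_ker.1 hz, map_zero]
      · rintro w ⟨z, hz, rfl⟩
        rw [LinearMap.mem_ker, hSρ, LinearMap.mem_ker.1 hz, map_zero]
    intro z hz
    have : ρ z ∈ (LinearMap.ker ρ₁).map ρ := ⟨z, hz, rfl⟩
    rw [hN] at this
    exact this
  -- construct the intertwiner Φ : W₁ → W
  let e : (A ⊗[k] V ⧸ LinearMap.ker ρ₁) ≃ₗ[k] W₁ := ρ₁.quotKerEquivOfSurjective hρ₁surj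
  let Φ : W₁ →ₗ[k] W := ((LinearMap.ker ρ₁).liftQ ρ hker) ∘ₗ (e.symm : W₁ →ₗ[k] _)
  have he : ∀ z : A ⊗[k] V, e (Submodule.Quotient.mk z) = ρ₁ z := fun z => rfl
  have hΦρ : ∀ z : A ⊗[k] V, Φ (ρ₁ z) = ρ z := by
    intro z
    have : e.symm (ρ₁ z) = Submodule.Quotient.mk z := by
      rw [LinearEquiv.symm_apply_eq, he]
    show ((LinearMap.ker ρ₁).liftQ ρ hker) (e.symm (ρ₁ z)) = ρ z
    rw [this, Submodule.liftQ_apply]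
  have hΦsurj : Function.Surjective Φ := by
    intro w
    obtain ⟨z, rfl⟩ := hρsurj w
    exact ⟨ρ₁ z, hΦρ z⟩
  haveI : FiniteDimensional k W := Module.Finite.of_surjective ρ hρsurj
  haveI : FiniteDimensional k W₁ := Module.Finite.of_surjective ρ₁ hρ₁surj
  have hΦinj : Function.Injective Φ := by
    rw [← LinearMap.ker_eq_bot]
    have h1 := LinearMap.finrank_range_add_finrank_ker Φ
    rw [LinearMap.range_eq_top.2 hΦsurj, finrank_top] at h1
    have h2 : Module.finrank k (LinearMap.ker Φ) = 0 := by omega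
    exact Submodule.finrank_eq_zero.1 h2
  have hΦπ : ∀ (a : A) (w : W₁), Φ (π₁ a w) = π a (Φ w) := by
    intro a w
    obtain ⟨z, rfl⟩ := hρ₁surj w
    rw [← hcomm₁, hΦρ, hΦρ, hcomm]
  have hSΦ : ∀ w : W₁, S (Φ w) = S₁ w := by
    intro w
    obtain ⟨z, rfl⟩ := hρ₁surj w
    rw [hΦρ, hSρ]
  intro K hKinv hKS
  have hmapbot : K.map Φ = ⊥ := by
    refine hirr _ ?_ ?_
    · intro a w hw
      obtain ⟨v, hv, rfl⟩ := hw
      obtain ⟨u, hu, rfl⟩ := hv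
      exact ⟨π₁ a u, hKinv a ⟨u, hu, rfl⟩, hΦπ a u⟩
    · rintro w ⟨u, hu, rfl⟩
      rw [LinearMap.mem_ker, hSΦ]
      exact hKS hu
  rw [eq_bot_iff]
  intro u hu
  have : Φ u ∈ K.map Φ := ⟨u, hu, rfl⟩
  rw [hmapbot, Submodule.mem_bot] at this
  have : Φ u = Φ 0 := by rw [map_zero]; exact this
  exact hΦinj this
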